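/- For every function u : ℤ³ → ℂ with u(0) = 0 and Σ_{α ≠ 0} |α|·|u(α)|² < ∞, and every k ∈ ℤ³ with k ≠ 0, one has Σ_{α ∈ ℤ³, 0 < |α| < 2|k|} |α|·|u(α)|·|u(k−α)| ≤ √2·√|k| · (Σ_{α ≠ 0} |α|·|u(α)|²)^{1/2} · (Σ_{α ∈ ℤ³} |u(α)|²)^{1/2}. -/
import Mathlib


/-- The Euclidean norm of a lattice point in `ℤ³`. -/
noncomputable def znorm (a : Fin 3 → ℤ) : ℝ := Real.sqrt (∑ i, ((a i : ℝ)) ^ 2)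

lemma znorm_nonneg (a : Fin 3 → ℤ) : 0 ≤ znorm a := Real.sqrt_nonneg _

lemma one_le_znorm {a : Fin 3 → ℤ} (ha : a ≠ 0) : 1 ≤ znorm a := by
  have : ∃ i, a i ≠ 0 := by
    by_contra h
    push_neg at h
    exact ha (funext h)
  obtain ⟨i, hi⟩ := this
  have h1 : (1 : ℝ) ≤ (a i : ℝ) ^ 2 := by
    have : 1 ≤ |a i| := Int.one_le_abs (by exact_mod_cast hi)
    have : (1:ℝ) ≤ |(a i : ℝ)| := by exact_mod_cast (by simpa using this)
    nlinarith [sq_abs ((a i : ℝ))]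
  have h2 : (1 : ℝ) ≤ ∑ j, ((a j : ℝ)) ^ 2 := by
    refine h1.trans ?_
    exact Finset.single_le_sum (f := fun j => ((a j : ℝ)) ^ 2) (fun j _ => sq_nonneg _)
      (Finset.mem_univ i)
  calc (1:ℝ) = Real.sqrt 1 := (Real.sqrt_one).symm
  _ ≤ znorm a := Real.sqrt_le_sqrt h2

lemma znorm_pos_iff {a : Fin 3 → ℤ} : 0 < znorm a ↔ a ≠ 0 := by
  constructor
  · intro h ha
    subst ha
    simp [znorm] at h
  · intro ha
    exact lt_of_lt_of_le one_pos (one_le_znorm ha)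

/-- Cauchy–Schwarz for tsums. -/
lemma tsum_mul_le_sqrt_mul_sqrt {ι : Type*} (f g : ι → ℝ)
    (hf0 : ∀ i, 0 ≤ f i) (hg0 : ∀ i, 0 ≤ g i)
    (hf : Summable (fun i => f i ^ 2)) (hg : Summable (fun i => g i ^ 2)) :
    ∑' i, f i * g i ≤ Real.sqrt (∑' i, f i ^ 2) * Real.sqrt (∑' i, g i ^ 2) := by
  have hfg : Summable (fun i => f i * g i) := by
    apply Summable.of_nonneg_of_le (fun i => mul_nonneg (hf0 i) (hg0 i))
      (fun i => ?_) ((hf.add hg).mul_left (1/2))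
    nlinarith [sq_nonneg (f i - g i)]
  refine Summable.tsum_le_of_sum_le hfg (fun s => ?_)
  calc ∑ i ∈ s, f i * g i ≤ Real.sqrt (∑ i ∈ s, f i ^ 2) * Real.sqrt (∑ i ∈ s, g i ^ 2) :=
        Real.sum_mul_le_sqrt_mul_sqrt s f g
  _ ≤ Real.sqrt (∑' i, f i ^ 2) * Real.sqrt (∑' i, g i ^ 2) := by
      gcongr <;> [exact Summable.sum_le_tsum s (fun i _ => sq_nonneg _) hf;
        exact Summable.sum_le_tsum s (fun i _ => sq_nonneg _) hg]

/-- For `u : ℤ³ → ℂ` with `u 0 = 0` and summable `∑_{α ≠ 0} |α||u α|²`, and `k ≠ 0`,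
`∑_{0 < |α| < 2|k|} |α||u α||u (k−α)| ≤ √2·√|k|·(∑_{α ≠ 0} |α||u α|²)^{1/2}·(∑_α |u α|²)^{1/2}`. -/
theorem cauchy_schwarz_low_piece
    (u : (Fin 3 → ℤ) → ℂ) (hu0 : u 0 = 0)
    (hsum : Summable (fun α : {a : Fin 3 → ℤ // a ≠ 0} => znorm α.1 * ‖u α.1‖ ^ 2))
    (k : Fin 3 → ℤ) (hk : k ≠ 0) :
    (∑' α : {a : Fin 3 → ℤ // 0 < znorm a ∧ znorm a < 2 * znorm k},
        znorm α.1 * ‖u α.1‖ * ‖u (k - α.1)‖)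
      ≤ Real.sqrt 2 * Real.sqrt (znorm k)
        * Real.sqrt (∑' α : {a : Fin 3 → ℤ // a ≠ 0}, znorm α.1 * ‖u α.1‖ ^ 2)
        * Real.sqrt (∑' α : Fin 3 → ℤ, ‖u α‖ ^ 2) := by
  set S := {a : Fin 3 → ℤ // 0 < znorm a ∧ znorm a < 2 * znorm k}
  -- summability of ∑ ‖u α‖² over all of ℤ³
  have hsum2 : Summable (fun α : Fin 3 → ℤ => ‖u α‖ ^ 2) := by
    have h1 : Summable (fun α : {a : Fin 3 → ℤ // a ≠ 0} => ‖u α.1‖ ^ 2) := by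
      apply Summable.of_nonneg_of_le (fun i => sq_nonneg _) (fun i => ?_) hsum
      have := one_le_znorm i.2
      nlinarith [sq_nonneg ‖u i.1‖]
    have h2 : Summable (Set.indicator {a : Fin 3 → ℤ | a ≠ 0}
        (fun α => ‖u α‖ ^ 2)) := summable_subtype_iff_indicator.mp h1
    refine h2.congr (fun α => ?_)
    by_cases hα : α = 0
    · subst hα; simp [Set.indicator, hu0]
    · simp [Set.indicator, hα]
  -- Cauchy-Schwarz with f = √|α|‖u α‖, g = √|α|‖u(k-α)‖
  have key := tsum_mul_le_sqrt_mul_sqrt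
    (f := fun α : S => Real.sqrt (znorm α.1) * ‖u α.1‖)
    (g := fun α : S => Real.sqrt (znorm α.1) * ‖u (k - α.1)‖)
    (fun i => mul_nonneg (Real.sqrt_nonneg _) (norm_nonneg _))
    (fun i => mul_nonneg (Real.sqrt_nonneg _) (norm_nonneg _))
    ?_ ?_
  · -- main chain
    have hsq : ∀ α : S, (Real.sqrt (znorm α.1) * ‖u α.1‖) ^ 2 = znorm α.1 * ‖u α.1‖ ^ 2 := by
      intro α
      rw [mul_pow, Real.sq_sqrt (znorm_nonneg _)]
    have hsq' : ∀ α : S, (Real.sqrt (znorm α.1) * ‖u (k - α.1)‖) ^ 2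
        = znorm α.1 * ‖u (k - α.1)‖ ^ 2 := by
      intro α
      rw [mul_pow, Real.sq_sqrt (znorm_nonneg _)]
    have hterm : ∀ α : S, znorm α.1 * ‖u α.1‖ * ‖u (k - α.1)‖
        = (Real.sqrt (znorm α.1) * ‖u α.1‖) * (Real.sqrt (znorm α.1) * ‖u (k - α.1)‖) := by
      intro α
      rw [mul_mul_mul_comm, Real.mul_self_sqrt (znorm_nonneg _), mul_assoc]
    -- bound first square sum by full sum over α ≠ 0
    have hA : (∑' α : S, (Real.sqrt (znorm α.1) * ‖u α.1‖) ^ 2)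
        ≤ ∑' α : {a : Fin 3 → ℤ // a ≠ 0}, znorm α.1 * ‖u α.1‖ ^ 2 := by
      refine Summable.tsum_le_tsum_of_inj
        (fun α : S => (⟨α.1, znorm_pos_iff.mp α.2.1⟩ : {a : Fin 3 → ℤ // a ≠ 0}))
        (fun a b hab => Subtype.ext (by simpa using congrArg Subtype.val hab))
        (fun c _ => mul_nonneg ((znorm_nonneg _)) (sq_nonneg _))
        (fun α => (hsq α).le) ?_ hsum
      refine Summable.of_nonneg_of_le (fun i => sq_nonneg _) (fun i => (hsq i).le) ?_
      exact hsum.comp_injective (i := fun α : S =>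
        (⟨α.1, znorm_pos_iff.mp α.2.1⟩ : {a : Fin 3 → ℤ // a ≠ 0}))
        (fun a b hab => Subtype.ext (by simpa using congrArg Subtype.val hab))
    -- bound second square sum by 2|k| ∑ ‖u‖²
    have hB : (∑' α : S, (Real.sqrt (znorm α.1) * ‖u (k - α.1)‖) ^ 2)
        ≤ 2 * znorm k * ∑' α : Fin 3 → ℤ, ‖u α‖ ^ 2 := by
      have hinj : Function.Injective (fun α : S => k - α.1) := by
        intro a b hab
        apply Subtype.ext
        have : k - a.1 = k - b.1 := hab
        linear_combination (norm := module) -this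
      calc (∑' α : S, (Real.sqrt (znorm α.1) * ‖u (k - α.1)‖) ^ 2)
          ≤ ∑' α : Fin 3 → ℤ, 2 * znorm k * ‖u α‖ ^ 2 := by
            refine Summable.tsum_le_tsum_of_inj (fun α : S => k - α.1) hinj
              (fun c _ => mul_nonneg (mul_nonneg (by norm_num) (znorm_nonneg k)) (sq_nonneg _)) (fun α => ?_) ?_ (hsum2.mul_left _)
            · rw [hsq' α]
              have h2 := α.2.2.le
              have := sq_nonneg ‖u (k - α.1)‖
              nlinarith
            · refine Summable.of_nonneg_of_le (fun i => sq_nonneg _) (fun α => ?_)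
                (((hsum2.mul_left (2 * znorm k)).comp_injective hinj))
              rw [hsq' α]
              have h2 := α.2.2.le
              have := sq_nonneg ‖u (k - α.1)‖
              simp only [Function.comp]
              nlinarith
      _ = 2 * znorm k * ∑' α : Fin 3 → ℤ, ‖u α‖ ^ 2 := tsum_mul_left
    calc (∑' α : S, znorm α.1 * ‖u α.1‖ * ‖u (k - α.1)‖)
        = ∑' α : S, (Real.sqrt (znorm α.1) * ‖u α.1‖) * (Real.sqrt (znorm α.1) * ‖u (k - α.1)‖) :=
          tsum_congr hterm
    _ ≤ _ := key
    _ ≤ Real.sqrt (∑' α : {a : Fin 3 → ℤ // a ≠ 0}, znorm α.1 * ‖u α.1‖ ^ 2)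
          * Real.sqrt (2 * znorm k * ∑' α : Fin 3 → ℤ, ‖u α‖ ^ 2) := by
        exact mul_le_mul (Real.sqrt_le_sqrt hA) (Real.sqrt_le_sqrt hB)
          (Real.sqrt_nonneg _) (Real.sqrt_nonneg _)
    _ = Real.sqrt 2 * Real.sqrt (znorm k)
          * Real.sqrt (∑' α : {a : Fin 3 → ℤ // a ≠ 0}, znorm α.1 * ‖u α.1‖ ^ 2)
          * Real.sqrt (∑' α : Fin 3 → ℤ, ‖u α‖ ^ 2) := by
        rw [Real.sqrt_mul (mul_nonneg (by norm_num) (znorm_nonneg k)),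
          Real.sqrt_mul (by norm_num) (znorm k)]
        ring
  · refine Summable.of_nonneg_of_le (fun i => sq_nonneg _)
      (fun α => (by rw [mul_pow, Real.sq_sqrt (znorm_nonneg _)] : _ ≤ _)) ?_
    exact hsum.comp_injective (i := fun α : S =>
      (⟨α.1, znorm_pos_iff.mp α.2.1⟩ : {a : Fin 3 → ℤ // a ≠ 0}))
      (fun a b hab => Subtype.ext (by simpa using congrArg Subtype.val hab))
  · have hinj : Function.Injective (fun α : S => k - α.1) := by
      intro a b hab
      apply Subtype.ext
      have : k - a.1 = k - b.1 := hab
      linear_combination (norm := module) -this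
    refine Summable.of_nonneg_of_le (fun i => sq_nonneg _) (fun α => ?_)
      (((hsum2.mul_left (2 * znorm k)).comp_injective hinj))
    rw [mul_pow, Real.sq_sqrt (znorm_nonneg _)]
    have h2 := α.2.2.le
    have := sq_nonneg ‖u (k - α.1)‖
    simp only [Function.comp]
    nlinarith
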